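/- arXiv:1802.10065 — 9 statements merged into one kernel-verified Lean document; each statement's English description precedes it below -/
import Mathlib

section
/- For all x > 0 and s ∈ (0,1], the lower incomplete gamma function satisfies γ(s,x) ≤ (x^s / (s(s+1))) · (1 + s·e^{-x}). -/
/-- Lower incomplete gamma function γ(s,x) = ∫₀^x t^(s-1) e^(-t) dt. -/
noncomputable def lowerGamma (s x : ℝ) : ℝ := ∫ t in (0:ℝ)..x, t ^ (s - 1) * Real.exp (-t)

theorem lowerGamma_upper_bound (s x : ℝ) (hx : 0 < x) (hs : 0 < s) (hs1 : s ≤ 1) :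
    lowerGamma s x ≤ x ^ s / (s * (s + 1)) * (1 + s * Real.exp (-x)) := by
  set c : ℝ := (1 - Real.exp (-x)) / x with hc
  have hint1 : IntervalIntegrable (fun t : ℝ => t ^ (s - 1) * Real.exp (-t))
      MeasureTheory.volume 0 x := by
    apply (intervalIntegral.intervalIntegrable_rpow' (by linarith)).mul_continuousOn
    exact (Real.continuous_exp.comp continuous_neg).continuousOn
  have hint2 : IntervalIntegrable (fun t : ℝ => t ^ (s - 1) - c * t ^ s)
      MeasureTheory.volume 0 x := by
    exact (intervalIntegral.intervalIntegrable_rpow' (by linarith)).sub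
      ((intervalIntegral.intervalIntegrable_rpow' (by linarith)).const_mul _)
  have key : lowerGamma s x ≤ ∫ t in (0:ℝ)..x, (t ^ (s - 1) - c * t ^ s) := by
    apply intervalIntegral.integral_mono_on hx.le hint1 hint2
    intro t ht
    rcases eq_or_lt_of_le ht.1 with h0 | h0
    · rw [← h0]
      simp [Real.zero_rpow hs.ne']
    · have hexp : Real.exp (-t) ≤ 1 - t / x + t / x * Real.exp (-x) := by
        have hl0 : (0:ℝ) ≤ t / x := div_nonneg h0.le hx.le
        have hl1 : t / x ≤ 1 := (div_le_one hx).2 ht.2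
        have := convexOn_exp.2 (Set.mem_univ (0:ℝ)) (Set.mem_univ (-x))
          (by linarith : (0:ℝ) ≤ 1 - t / x) hl0 (by ring)
        have heq : (1 - t / x) • (0:ℝ) + (t / x) • (-x) = -t := by
          simp only [smul_eq_mul, mul_zero, zero_add]
          field_simp
        rw [heq] at this
        simpa using this
      have h1 : t ^ (s - 1) * Real.exp (-t) ≤
          t ^ (s - 1) * (1 - t / x + t / x * Real.exp (-x)) :=
        mul_le_mul_of_nonneg_left hexp (Real.rpow_nonneg h0.le _)
      have h2 : t ^ (s - 1) * (1 - t / x + t / x * Real.exp (-x)) =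
          t ^ (s - 1) - c * t ^ s := by
        have hts : t ^ s = t ^ (s - 1) * t := by
          rw [← Real.rpow_add_one h0.ne']; ring_nf
        rw [hts, hc]
        field_simp
        ring
      linarith
  have e1 : (∫ t in (0:ℝ)..x, t ^ (s - 1)) = x ^ s / s := by
    rw [integral_rpow (Or.inl (by linarith))]
    rw [Real.zero_rpow (by linarith : s - 1 + 1 ≠ 0)]
    ring_nf
  have e2 : (∫ t in (0:ℝ)..x, t ^ s) = x ^ (s + 1) / (s + 1) := by
    rw [integral_rpow (Or.inl (by linarith))]
    rw [Real.zero_rpow (by linarith : s + 1 ≠ 0)]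
    ring
  have esplit : (∫ t in (0:ℝ)..x, (t ^ (s - 1) - c * t ^ s))
      = x ^ s / s - c * (x ^ (s + 1) / (s + 1)) := by
    rw [intervalIntegral.integral_sub (intervalIntegral.intervalIntegrable_rpow' (by linarith))
      ((intervalIntegral.intervalIntegrable_rpow' (by linarith)).const_mul _),
      intervalIntegral.integral_const_mul, e1, e2]
  have hxs1 : x ^ (s + 1) = x ^ s * x := by
    rw [Real.rpow_add_one hx.ne']
  rw [esplit, hxs1, hc] at key
  have hfin : x ^ s / s - (1 - Real.exp (-x)) / x * (x ^ s * x / (s + 1))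
      = x ^ s / (s * (s + 1)) * (1 + s * Real.exp (-x)) := by
    field_simp
    ring
  linarith [key, hfin.ge, hfin.le]
end

section
/- For all x > 0 and s ∈ (0,1], one has -x/(1+s) ≤ e^{-x} - s·γ(s,x)/x^s ≤ -x(1-x)/2. -/
open intervalIntegral MeasureTheory Set

lemma int1 (s x : ℝ) (hs : 0 < s) :
    IntervalIntegrable (fun t => t ^ (s - 1) * Real.exp (-t)) volume 0 x :=
  (intervalIntegral.intervalIntegrable_rpow' (by linarith)).mul_continuousOn
    (Continuous.continuousOn (by continuity))

lemma int2 (s x : ℝ) (hs : 0 < s) :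
    IntervalIntegrable (fun t => t ^ s * Real.exp (-t)) volume 0 x :=
  (intervalIntegral.intervalIntegrable_rpow' (by linarith)).mul_continuousOn
    (Continuous.continuousOn (by continuity))

lemma key (s x : ℝ) (hx : 0 < x) (hs : 0 < s) :
    s * (∫ t in (0:ℝ)..x, t ^ (s - 1) * Real.exp (-t))
      = x ^ s * Real.exp (-x) + ∫ t in (0:ℝ)..x, t ^ s * Real.exp (-t) := by
  have hg : ContinuousOn (fun t : ℝ => t ^ s * Real.exp (-t)) (Icc 0 x) := by
    apply ContinuousOn.mul _ (Continuous.continuousOn (by continuity))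
    intro t ht
    exact (Real.continuousAt_rpow_const t s (Or.inr hs.le)).continuousWithinAt
  have hderiv : ∀ t ∈ Ioo (0:ℝ) x,
      HasDerivWithinAt (fun t : ℝ => t ^ s * Real.exp (-t))
        (s * t ^ (s - 1) * Real.exp (-t) - t ^ s * Real.exp (-t)) (Ioi t) t := by
    intro t ht
    have h1 : HasDerivAt (fun t : ℝ => t ^ s) (s * t ^ (s - 1)) t :=
      Real.hasDerivAt_rpow_const (Or.inl (ne_of_gt ht.1))
    have h2 : HasDerivAt (fun t : ℝ => Real.exp (-t)) (-Real.exp (-t)) t := by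
      simpa [Function.comp_def] using (Real.hasDerivAt_exp (-t)).comp t (hasDerivAt_neg t)
    have : HasDerivAt (fun t : ℝ => t ^ s * Real.exp (-t))
        (s * t ^ (s - 1) * Real.exp (-t) - t ^ s * Real.exp (-t)) t :=
      (h1.mul h2).congr_deriv (by ring)
    apply HasDerivAt.hasDerivWithinAt
    exact this
  have hint : IntervalIntegrable
      (fun t => s * t ^ (s - 1) * Real.exp (-t) - t ^ s * Real.exp (-t)) volume 0 x := by
    have := ((int1 s x hs).const_mul s).sub (int2 s x hs)
    simpa [mul_assoc] using this
  have := intervalIntegral.integral_eq_sub_of_hasDeriv_right_of_le hx.le hg hderiv hint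
  have hint1 : IntervalIntegrable (fun t => s * t ^ (s - 1) * Real.exp (-t)) volume 0 x := by
    simpa [mul_assoc] using (int1 s x hs).const_mul s
  rw [intervalIntegral.integral_sub hint1 (int2 s x hs)] at this
  rw [Real.zero_rpow (ne_of_gt hs)] at this
  have h0 : (∫ t in (0:ℝ)..x, s * t ^ (s - 1) * Real.exp (-t))
      = s * ∫ t in (0:ℝ)..x, t ^ (s - 1) * Real.exp (-t) := by
    rw [← intervalIntegral.integral_const_mul]
    congr 1; ext t; ring
  rw [h0] at this
  linarith

theorem exp_sub_lowerGamma_bounds' (s x : ℝ) (hx : 0 < x) (hs : 0 < s) (hs1 : s ≤ 1) :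
    -x / (1 + s) ≤ Real.exp (-x) - s * (∫ t in (0:ℝ)..x, t ^ (s - 1) * Real.exp (-t)) / x ^ s ∧
    Real.exp (-x) - s * (∫ t in (0:ℝ)..x, t ^ (s - 1) * Real.exp (-t)) / x ^ s ≤ -(x * (1 - x)) / 2 := by
  set F := ∫ t in (0:ℝ)..x, t ^ s * Real.exp (-t) with hF
  set X := x ^ s with hX
  have hXpos : 0 < X := Real.rpow_pos_of_pos hx s
  have hkey := key s x hx hs
  have hE : Real.exp (-x) - s * (∫ t in (0:ℝ)..x, t ^ (s - 1) * Real.exp (-t)) / x ^ s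
      = -F / X := by
    rw [hkey, hX, ← hF]
    field_simp
    ring
  have hxs1 : x ^ (s + 1) = X * x := by
    rw [hX, Real.rpow_add hx, Real.rpow_one]
  have hxs2 : x ^ (s + 2) = X * x ^ 2 := by
    rw [hX, Real.rpow_add hx, Real.rpow_two]
  -- integrability of plain rpows
  have i1 : IntervalIntegrable (fun t : ℝ => t ^ s) volume 0 x :=
    intervalIntegral.intervalIntegrable_rpow' (by linarith)
  have i2 : IntervalIntegrable (fun t : ℝ => t ^ (s + 1)) volume 0 x :=
    intervalIntegral.intervalIntegrable_rpow' (by linarith)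
  have c1 : (∫ t in (0:ℝ)..x, t ^ s) = x ^ (s + 1) / (s + 1) := by
    rw [integral_rpow (Or.inl (by linarith))]
    rw [Real.zero_rpow (by linarith)]
    ring
  have c2 : (∫ t in (0:ℝ)..x, t ^ (s + 1)) = x ^ (s + 2) / (s + 2) := by
    rw [integral_rpow (Or.inl (by linarith))]
    rw [Real.zero_rpow (by linarith)]
    norm_num
    ring_nf
  -- upper bound on F
  have hFub : F ≤ X * x / (s + 1) := by
    have : F ≤ ∫ t in (0:ℝ)..x, t ^ s := by
      apply intervalIntegral.integral_mono_on hx.le (int2 s x hs) i1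
      intro t ht
      have h1 : Real.exp (-t) ≤ 1 := Real.exp_le_one_iff.2 (by linarith [ht.1])
      have h2 : (0:ℝ) ≤ t ^ s := Real.rpow_nonneg ht.1 s
      nlinarith
    rw [c1, hxs1] at this
    exact this
  -- lower bound on F
  have hFlb : X * x / (s + 1) - X * x ^ 2 / (s + 2) ≤ F := by
    have : (∫ t in (0:ℝ)..x, (t ^ s - t ^ (s + 1))) ≤ F := by
      apply intervalIntegral.integral_mono_on hx.le (i1.sub i2) (int2 s x hs)
      intro t ht
      have h2 : (0:ℝ) ≤ t ^ s := Real.rpow_nonneg ht.1 s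
      have hts : t ^ (s + 1) = t ^ s * t := by
        rcases eq_or_lt_of_le ht.1 with h | h
        · rw [← h, Real.zero_rpow (by linarith), Real.zero_rpow (ne_of_gt hs)]
          ring
        · rw [Real.rpow_add h, Real.rpow_one]
      have hexp : 1 - t ≤ Real.exp (-t) := by linarith [Real.add_one_le_exp (-t)]
      have := mul_le_mul_of_nonneg_left hexp h2
      nlinarith
    rw [intervalIntegral.integral_sub i1 i2, c1, c2, hxs1, hxs2] at this
    exact this
  rw [hE]
  constructor
  · rw [div_le_div_iff₀ (by linarith) hXpos]
    rw [le_div_iff₀ (by linarith : (0:ℝ) < s + 1)] at hFub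
    nlinarith
  · rw [div_le_div_iff₀ hXpos (by norm_num : (0:ℝ) < 2)]
    have h1 : X * x / 2 ≤ X * x / (s + 1) := by
      rw [div_le_div_iff₀ (by norm_num) (by linarith)]
      nlinarith [mul_pos hXpos hx]
    have h2 : X * x ^ 2 / (s + 2) ≤ X * x ^ 2 / 2 := by
      rw [div_le_div_iff₀ (by linarith) (by norm_num)]
      nlinarith [mul_pos hXpos (pow_pos hx 2)]
    nlinarith

theorem exp_sub_lowerGamma_bounds (s x : ℝ) (hx : 0 < x) (hs : 0 < s) (hs1 : s ≤ 1) :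
    -x / (1 + s) ≤ Real.exp (-x) - s * lowerGamma s x / x ^ s ∧
    Real.exp (-x) - s * lowerGamma s x / x ^ s ≤ -(x * (1 - x)) / 2 := by
  unfold lowerGamma
  exact exp_sub_lowerGamma_bounds' s x hx hs hs1
end

section
/- For all x > s > 0, the upper incomplete gamma function satisfies Γ(s,x) ≤ x^s e^{-x} / (x - s). -/
open MeasureTheory Set Filter

/-- Upper incomplete gamma function Γ(s,x) = ∫ₓ^∞ t^(s-1) e^(-t) dt. -/
noncomputable def upperGamma (s x : ℝ) : ℝ := ∫ t in Set.Ioi x, t ^ (s - 1) * Real.exp (-t)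

lemma upperGamma_integrable_aux (s x : ℝ) (hs : 0 < s) (hx : 0 < x) :
    IntegrableOn (fun t => t ^ (s - 1) * Real.exp (-t)) (Set.Ioi x) := by
  have h := (Real.GammaIntegral_convergent hs).mono_set (Set.Ioi_subset_Ioi hx.le)
  exact h.congr_fun (fun t _ => mul_comm _ _) measurableSet_Ioi

theorem upperGamma_upper_bound (s x : ℝ) (hs : 0 < s) (hsx : s < x) :
    upperGamma s x ≤ x ^ s * Real.exp (-x) / (x - s) := by
  have hx : 0 < x := hs.trans hsx
  have hxs : 0 < x - s := by linarith
  set g : ℝ → ℝ := fun t => -(t ^ s * Real.exp (-t)) with hg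
  set g' : ℝ → ℝ := fun t => t ^ (s - 1) * Real.exp (-t) * (t - s) with hg'
  -- derivative
  have hderiv : ∀ t ∈ Set.Ioi x, HasDerivAt g (g' t) t := by
    intro t ht
    have ht0 : 0 < t := hx.trans ht
    have h1 : HasDerivAt (fun y : ℝ => y ^ s) (s * t ^ (s - 1)) t :=
      Real.hasDerivAt_rpow_const (Or.inl ht0.ne')
    have h2 : HasDerivAt (fun y : ℝ => Real.exp (-y)) (-Real.exp (-t)) t := by
      exact (by simpa using (Real.hasDerivAt_exp (-t)).comp t (hasDerivAt_neg t) :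
        HasDerivAt (Real.exp ∘ Neg.neg) (-Real.exp (-t)) t)
    have h3 := (h1.mul h2).neg
    convert h3 using 1
    · rfl
    · rfl
    · rfl
    have : t ^ s = t ^ (s - 1) * t := by
      rw [← Real.rpow_add_one ht0.ne']; ring_nf
    rw [hg']
    simp only []
    rw [this]; ring
  -- integrabilities
  have hint0 : IntegrableOn (fun t => t ^ (s - 1) * Real.exp (-t)) (Set.Ioi x) :=
    upperGamma_integrable_aux s x hs hx
  have hint1 : IntegrableOn (fun t => t ^ s * Real.exp (-t)) (Set.Ioi x) := by
    have := upperGamma_integrable_aux (s + 1) x (by linarith) hx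
    simpa using this
  have hintg' : IntegrableOn g' (Set.Ioi x) := by
    have h : IntegrableOn
        (fun t => t ^ s * Real.exp (-t) - s * (t ^ (s - 1) * Real.exp (-t)))
        (Set.Ioi x) := hint1.sub (hint0.const_mul s)
    apply h.congr_fun _ measurableSet_Ioi
    intro t ht
    have ht0 : 0 < t := hx.trans ht
    have : t ^ s = t ^ (s - 1) * t := by
      rw [← Real.rpow_add_one ht0.ne']; ring_nf
    simp only [hg', this]; ring
  -- FTC
  have hcont : ContinuousWithinAt g (Set.Ici x) x := by
    apply ContinuousAt.continuousWithinAt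
    exact ((Real.continuousAt_rpow_const x s (Or.inl hx.ne')).mul
      (Real.continuous_exp.continuousAt.comp (continuous_neg.continuousAt))).neg
  have htend : Tendsto g atTop (nhds 0) := by
    have := tendsto_rpow_mul_exp_neg_mul_atTop_nhds_zero s 1 one_pos
    have h2 : Tendsto (fun t : ℝ => t ^ s * Real.exp (-t)) atTop (nhds 0) := by
      simpa using this
    simpa using h2.neg
  have hFTC : ∫ t in Set.Ioi x, g' t = x ^ s * Real.exp (-x) := by
    rw [integral_Ioi_of_hasDerivAt_of_tendsto hcont hderiv hintg' htend]
    simp [hg]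
  -- pointwise bound
  have hmono : upperGamma s x ≤ ∫ t in Set.Ioi x, g' t / (x - s) := by
    apply setIntegral_mono_on hint0 (hintg'.div_const _) measurableSet_Ioi
    intro t ht
    have ht0 : 0 < t := hx.trans ht
    have hnn : 0 ≤ t ^ (s - 1) * Real.exp (-t) :=
      mul_nonneg (Real.rpow_nonneg ht0.le _) (Real.exp_pos _).le
    rw [hg', le_div_iff₀ hxs]
    have : x - s ≤ t - s := by linarith [ht.out]
    calc t ^ (s - 1) * Real.exp (-t) * (x - s)
        ≤ t ^ (s - 1) * Real.exp (-t) * (t - s) := by nlinarith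
      _ = _ := by ring
  calc upperGamma s x ≤ ∫ t in Set.Ioi x, g' t / (x - s) := hmono
    _ = (∫ t in Set.Ioi x, g' t) / (x - s) := by rw [integral_div]
    _ = x ^ s * Real.exp (-x) / (x - s) := by rw [hFTC]
end

section
/- Fix δ ∈ (0,1). For all s > 0 and all x ≥ δ·s, the upper incomplete gamma function satisfies Γ(s,x) ≤ x^s e^{-x} · √(2π/(δs)) · exp((δs/2)·(1/δ - 1)²). -/
set_option maxHeartbeats 1000000

open MeasureTheory Real Set

theorem upperGamma_uniform_bound (δ s x : ℝ) (hδ0 : 0 < δ) (hδ1 : δ < 1)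
    (hs : 0 < s) (hx : δ * s ≤ x) :
    upperGamma s x ≤
      x ^ s * Real.exp (-x) * Real.sqrt (2 * Real.pi / (δ * s)) *
        Real.exp (δ * s / 2 * (1 / δ - 1) ^ 2) := by
  have hx0 : 0 < x := lt_of_lt_of_le (by positivity) hx
  set β : ℝ := δ * s / 2 with hβ
  have hβ0 : 0 < β := by positivity
  set a : ℝ := 1 / δ - 1 with haa
  set C : ℝ := δ * s / 2 * (1 / δ - 1) ^ 2 with hC
  set K : ℝ := x ^ s * Real.exp (-x) * Real.exp C with hK
  have hK0 : 0 < K := by positivity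
  set F : ℝ → ℝ := fun t => K * (t⁻¹ * Real.exp (-β * (Real.log (t / x) - a) ^ 2)) with hF
  -- image of Ioi 0 under w ↦ x * exp w
  have himg : (fun w => x * Real.exp w) '' (Ioi (0:ℝ)) = Ioi x := by
    ext t
    constructor
    · rintro ⟨w, hw, rfl⟩
      have h1 : (1:ℝ) < Real.exp w := by
        rw [← Real.exp_zero]
        exact Real.exp_lt_exp.2 (mem_Ioi.1 hw)
      simpa using (by nlinarith : x < x * Real.exp w)
    · intro ht
      have ht' : x < t := ht
      have ht0 : 0 < t := hx0.trans ht'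
      refine ⟨Real.log (t / x), ?_, ?_⟩
      · exact Real.log_pos ((one_lt_div hx0).2 ht')
      · show x * Real.exp (Real.log (t / x)) = t
        rw [Real.exp_log (by positivity)]
        field_simp
  have hderiv : ∀ w ∈ Ioi (0:ℝ), HasDerivWithinAt (fun w => x * Real.exp w)
      (x * Real.exp w) (Ioi 0) w := fun w _ =>
    ((Real.hasDerivAt_exp w).const_mul x).hasDerivWithinAt
  have hinj : InjOn (fun w => x * Real.exp w) (Ioi 0) := fun w1 _ w2 _ h => by
    have := mul_left_cancel₀ (ne_of_gt hx0) h
    exact Real.exp_injective this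
  -- the transported integrand
  have heq : (fun w => |x * Real.exp w| • F (x * Real.exp w))
      = fun w => K * Real.exp (-β * (w - a) ^ 2) := by
    funext w
    have hpos : 0 < x * Real.exp w := by positivity
    have hlg : Real.log (x * Real.exp w / x) = w := by
      rw [mul_comm x (Real.exp w), mul_div_assoc, div_self (ne_of_gt hx0), mul_one,
        Real.log_exp]
    rw [abs_of_pos hpos, smul_eq_mul, hF]
    simp only [hlg]
    field_simp
  have hInt2 : Integrable (fun w => K * Real.exp (-β * (w - a) ^ 2)) :=
    ((integrable_exp_neg_mul_sq hβ0).comp_sub_right a).const_mul K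
  have hIntF : IntegrableOn F (Ioi x) := by
    rw [← himg, integrableOn_image_iff_integrableOn_abs_deriv_smul measurableSet_Ioi hderiv hinj,
      heq]
    exact hInt2.integrableOn
  have hIeq : ∫ t in Ioi x, F t = ∫ w in Ioi (0:ℝ), K * Real.exp (-β * (w - a) ^ 2) := by
    rw [← himg, integral_image_eq_integral_abs_deriv_smul measurableSet_Ioi hderiv hinj, heq]
  -- gaussian bound
  have hgauss : ∫ w : ℝ, K * Real.exp (-β * (w - a) ^ 2) = K * Real.sqrt (π / β) := by
    rw [MeasureTheory.integral_const_mul]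
    congr 1
    rw [show (fun w : ℝ => Real.exp (-β * (w - a) ^ 2))
        = fun w => (fun y : ℝ => Real.exp (-β * y ^ 2)) (w - a) from rfl,
      integral_sub_right_eq_self (fun y : ℝ => Real.exp (-β * y ^ 2)) a]
    exact integral_gaussian β
  have hle2 : ∫ w in Ioi (0:ℝ), K * Real.exp (-β * (w - a) ^ 2) ≤ K * Real.sqrt (π / β) := by
    rw [← hgauss]
    exact setIntegral_le_integral hInt2 (Filter.Eventually.of_forall fun w => by positivity)
  -- pointwise bound
  have hpt : ∀ t ∈ Ioi x, t ^ (s - 1) * Real.exp (-t) ≤ F t := by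
    intro t ht
    have ht' : x < t := ht
    have ht0 : 0 < t := hx0.trans ht'
    set w : ℝ := Real.log (t / x) with hw
    have hw0 : 0 < w := Real.log_pos ((one_lt_div hx0).2 ht')
    have hexpw : Real.exp w = t / x := Real.exp_log (by positivity)
    have hteq : t = x * Real.exp w := by rw [hexpw]; field_simp
    have hts : t ^ s = x ^ s * Real.exp (w * s) := by
      have : t ^ s = (x * (t / x)) ^ s := by rw [mul_div_cancel₀ _ (ne_of_gt hx0)]
      rw [this, Real.mul_rpow hx0.le (by positivity),
        Real.rpow_def_of_pos (by positivity : (0:ℝ) < t / x)]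
    have hts1 : t ^ (s - 1) = x ^ s * Real.exp (w * s) / t := by
      rw [Real.rpow_sub ht0, Real.rpow_one, hts]
    rw [hts1, hF]
    have hexpineq : Real.exp (w * s) * Real.exp (-t)
        ≤ Real.exp (-x) * Real.exp C * Real.exp (-β * (w - a) ^ 2) := by
      rw [← Real.exp_add, ← Real.exp_add, ← Real.exp_add, Real.exp_le_exp]
      have hE : 1 + w + w ^ 2 / 2 ≤ Real.exp w := Real.quadratic_le_exp_of_nonneg hw0.le
      have key : -β * (w - a) ^ 2 + C = s * (1 - δ) * w - δ * s / 2 * w ^ 2 := by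
        rw [hβ, haa, hC]
        field_simp
        ring
      have h1 : δ * s * (w + w ^ 2 / 2) ≤ δ * s * (Real.exp w - 1) := by nlinarith
      have h2 : δ * s * (Real.exp w - 1) ≤ x * (Real.exp w - 1) :=
        mul_le_mul_of_nonneg_right hx (by nlinarith)
      rw [hteq]
      clear_value β a C K F w
      linarith [h1, h2, key]
    calc x ^ s * Real.exp (w * s) / t * Real.exp (-t)
        = x ^ s * (Real.exp (w * s) * Real.exp (-t)) / t := by ring
      _ ≤ x ^ s * (Real.exp (-x) * Real.exp C * Real.exp (-β * (w - a) ^ 2)) / t := by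
          gcongr
      _ = K * (t⁻¹ * Real.exp (-β * (w - a) ^ 2)) := by
          rw [hK]; field_simp
  have hmono : upperGamma s x ≤ ∫ t in Ioi x, F t := by
    unfold upperGamma
    apply integral_mono_of_nonneg ?_ hIntF ?_
    · filter_upwards [ae_restrict_mem measurableSet_Ioi] with t ht
      have ht0 : 0 < t := hx0.trans ht
      positivity
    · filter_upwards [ae_restrict_mem measurableSet_Ioi] with t ht
      exact hpt t ht
  have hfin : K * Real.sqrt (π / β)
      = x ^ s * Real.exp (-x) * Real.sqrt (2 * Real.pi / (δ * s)) * Real.exp C := by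
    rw [hK]
    have : π / β = 2 * π / (δ * s) := by rw [hβ]; field_simp
    rw [this]; ring
  calc upperGamma s x ≤ ∫ t in Ioi x, F t := hmono
    _ = ∫ w in Ioi (0:ℝ), K * Real.exp (-β * (w - a) ^ 2) := hIeq
    _ ≤ K * Real.sqrt (π / β) := hle2
    _ = _ := by rw [hfin]
end

section
/- Let 0 < a < 1 and define g(w) = 1 - e^{-w} - w^a·γ(1-a, w). Then for all w ≥ 1, g(w) ≤ 1 - e^{-1} - γ(1-a,1)·w^a. -/
/-- g(w) = 1 - e^(-w) - w^a·γ(1-a, w). -/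
noncomputable def gFun (a w : ℝ) : ℝ := 1 - Real.exp (-w) - w ^ a * lowerGamma (1 - a) w

theorem gFun_bound_ge_one (a : ℝ) (ha : 0 < a) (ha1 : a < 1) :
    ∀ w : ℝ, 1 ≤ w →
      gFun a w ≤ 1 - Real.exp (-1) - lowerGamma (1 - a) 1 * w ^ a := by
  intro w hw
  have hw0 : (0:ℝ) < w := lt_of_lt_of_le one_pos hw
  have hexpc : Continuous (fun t : ℝ => Real.exp (-t)) :=
    Real.continuous_exp.comp continuous_neg
  have hint01 : IntervalIntegrable (fun t => t ^ ((1-a) - 1) * Real.exp (-t))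
      MeasureTheory.volume 0 1 := by
    exact (intervalIntegral.intervalIntegrable_rpow' (by linarith)).mul_continuousOn hexpc.continuousOn
  have hint1w : IntervalIntegrable (fun t => t ^ ((1-a) - 1) * Real.exp (-t))
      MeasureTheory.volume 1 w := by
    exact (intervalIntegral.intervalIntegrable_rpow' (by linarith)).mul_continuousOn hexpc.continuousOn
  have hsplit : lowerGamma (1-a) w - lowerGamma (1-a) 1
      = ∫ t in (1:ℝ)..w, t ^ ((1-a)-1) * Real.exp (-t) := by
    unfold lowerGamma
    rw [← intervalIntegral.integral_add_adjacent_intervals hint01 hint1w]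
    ring
  have hexp : (∫ t in (1:ℝ)..w, Real.exp (-t)) = Real.exp (-1) - Real.exp (-w) := by
    have hd : ∀ t ∈ Set.uIcc (1:ℝ) w,
        HasDerivAt (fun t => -Real.exp (-t)) (Real.exp (-t)) t := by
      intro t _
      exact (((hasDerivAt_neg t).exp).neg).congr_deriv (by simp)
    rw [intervalIntegral.integral_eq_sub_of_hasDerivAt hd (hexpc.intervalIntegrable 1 w)]
    ring
  have hmono : (∫ t in (1:ℝ)..w, w ^ (-a) * Real.exp (-t))
      ≤ ∫ t in (1:ℝ)..w, t ^ ((1-a)-1) * Real.exp (-t) := by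
    apply intervalIntegral.integral_mono_on hw
    · exact (continuous_const.mul hexpc).intervalIntegrable 1 w
    · exact hint1w
    · intro t ht
      have ht1 : (1:ℝ) ≤ t := ht.1
      have hb : w ^ (-a) ≤ t ^ ((1-a)-1) := by
        have h : (1-a)-1 = -a := by ring
        rw [h]
        exact Real.rpow_le_rpow_of_nonpos (by linarith) ht.2 (by linarith)
      exact mul_le_mul_of_nonneg_right hb (Real.exp_nonneg _)
  rw [intervalIntegral.integral_const_mul, hexp] at hmono
  have key : Real.exp (-1) - Real.exp (-w)
      ≤ w ^ a * (lowerGamma (1-a) w - lowerGamma (1-a) 1) := by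
    rw [hsplit]
    calc Real.exp (-1) - Real.exp (-w)
        = w ^ a * (w ^ (-a) * (Real.exp (-1) - Real.exp (-w))) := by
          rw [← mul_assoc, ← Real.rpow_add hw0]; simp
      _ ≤ _ := mul_le_mul_of_nonneg_left hmono (Real.rpow_nonneg hw0.le a)
  unfold gFun
  nlinarith [key]
end

section
/- Let 0 < a < 1, η = (1-a)/a, and g(w) = 1 - e^{-w} - w^a·γ(1-a, w). Then g is differentiable on (0,∞) with g'(w) = -a·w^{a-1}·γ(1-a, w), and for all w > 0, -1/η ≤ g'(w) ≤ 0. Consequently g(w) ≥ -w/η for all w ≥ 0. -/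
open Real MeasureTheory intervalIntegral Set

lemma lg_intInt {a : ℝ} (ha1 : a < 1) (x y : ℝ) :
    IntervalIntegrable (fun t : ℝ => t ^ (-a) * Real.exp (-t)) volume x y :=
  (intervalIntegrable_rpow' (by linarith)).mul_continuousOn
    (Continuous.continuousOn (by continuity))

lemma lowerGamma_eq {a : ℝ} (x : ℝ) :
    lowerGamma (1 - a) x = ∫ t in (0:ℝ)..x, t ^ (-a) * Real.exp (-t) := by
  simp only [lowerGamma, show (1:ℝ) - a - 1 = -a by ring]

lemma lowerGamma_hasDerivAt {a : ℝ} (ha1 : a < 1) {w : ℝ} (hw : 0 < w) :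
    HasDerivAt (lowerGamma (1 - a)) (w ^ (-a) * Real.exp (-w)) w := by
  have hco : ContinuousOn (fun t : ℝ => t ^ (-a) * Real.exp (-t)) (Set.Ioi 0) := by
    intro t ht
    exact ((Real.continuousAt_rpow_const t (-a) (Or.inl (ne_of_gt ht))).mul
      ((Real.continuous_exp.comp continuous_neg).continuousAt)).continuousWithinAt
  have h := intervalIntegral.integral_hasDerivAt_right (lg_intInt ha1 0 w)
    (hco.stronglyMeasurableAtFilter isOpen_Ioi w hw)
    ((Real.continuousAt_rpow_const w (-a) (Or.inl (ne_of_gt hw))).mul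
      ((Real.continuous_exp.comp continuous_neg).continuousAt))
  have : lowerGamma (1 - a) = fun u => ∫ t in (0:ℝ)..u, t ^ (-a) * Real.exp (-t) := by
    funext u; exact lowerGamma_eq u
  rw [this]
  exact h

lemma lowerGamma_nonneg {a : ℝ} {w : ℝ} (hw : 0 ≤ w) : 0 ≤ lowerGamma (1 - a) w := by
  rw [lowerGamma_eq]
  apply intervalIntegral.integral_nonneg hw
  intro t ht
  exact mul_nonneg (Real.rpow_nonneg ht.1 _) (Real.exp_nonneg _)

lemma lowerGamma_le {a : ℝ} (ha1 : a < 1) {w : ℝ} (hw : 0 < w) :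
    lowerGamma (1 - a) w ≤ w ^ (1 - a) / (1 - a) := by
  rw [lowerGamma_eq]
  have h1 : (∫ t in (0:ℝ)..w, t ^ (-a) * Real.exp (-t)) ≤ ∫ t in (0:ℝ)..w, t ^ (-a) := by
    apply intervalIntegral.integral_mono_on hw.le (lg_intInt ha1 0 w)
      (intervalIntegrable_rpow' (by linarith))
    intro t ht
    have : Real.exp (-t) ≤ 1 := Real.exp_le_one_iff.mpr (by simpa using ht.1)
    calc t ^ (-a) * Real.exp (-t) ≤ t ^ (-a) * 1 := by
          exact mul_le_mul_of_nonneg_left this (Real.rpow_nonneg ht.1 _)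
      _ = t ^ (-a) := mul_one _
  have h2 : (∫ t in (0:ℝ)..w, t ^ (-a)) = w ^ (1 - a) / (1 - a) := by
    rw [integral_rpow (Or.inl (by linarith))]
    rw [Real.zero_rpow (by intro h; rw [show -a + 1 = 1 - a by ring] at h; nlinarith)]
    ring_nf
  linarith

lemma gFun_hasDerivAt {a : ℝ} (ha : 0 < a) (ha1 : a < 1) {w : ℝ} (hw : 0 < w) :
    HasDerivAt (gFun a) (-(a * w ^ (a - 1) * lowerGamma (1 - a) w)) w := by
  have h1 : HasDerivAt (fun w : ℝ => Real.exp (-w)) (Real.exp (-w) * (-1)) w :=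
    (hasDerivAt_neg w).exp
  have h2 : HasDerivAt (fun w : ℝ => w ^ a) (a * w ^ (a - 1)) w :=
    Real.hasDerivAt_rpow_const (Or.inl hw.ne')
  have h3 := lowerGamma_hasDerivAt ha1 hw
  have h := ((hasDerivAt_const w (1:ℝ)).sub h1).sub (h2.mul h3)
  have hpow : w ^ a * (w ^ (-a) * Real.exp (-w)) = Real.exp (-w) := by
    rw [← mul_assoc, ← Real.rpow_add hw]
    simp
  exact h.congr_deriv (by rw [hpow]; ring)

theorem gFun_deriv_bounds (a η : ℝ) (ha : 0 < a) (ha1 : a < 1) (hη : η = (1 - a) / a) :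
    (∀ w : ℝ, 0 < w →
      HasDerivAt (gFun a) (-(a * w ^ (a - 1) * lowerGamma (1 - a) w)) w) ∧
    (∀ w : ℝ, 0 < w →
      -(1 / η) ≤ -(a * w ^ (a - 1) * lowerGamma (1 - a) w) ∧
      -(a * w ^ (a - 1) * lowerGamma (1 - a) w) ≤ 0) ∧
    (∀ w : ℝ, 0 ≤ w → -(w / η) ≤ gFun a w) := by
  have hηpos : 0 < η := by rw [hη]; exact div_pos (by linarith) ha
  have hbound : ∀ w : ℝ, 0 < w →
      -(1 / η) ≤ -(a * w ^ (a - 1) * lowerGamma (1 - a) w) ∧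
      -(a * w ^ (a - 1) * lowerGamma (1 - a) w) ≤ 0 := by
    intro w hw
    constructor
    · have hle := lowerGamma_le ha1 hw
      have hp : (0:ℝ) < w ^ (a - 1) := Real.rpow_pos_of_pos hw _
      have key : a * w ^ (a - 1) * lowerGamma (1 - a) w ≤ 1 / η := by
        have : a * w ^ (a - 1) * lowerGamma (1 - a) w
            ≤ a * w ^ (a - 1) * (w ^ (1 - a) / (1 - a)) := by
          exact mul_le_mul_of_nonneg_left hle (mul_pos ha hp).le
        have hww : w ^ (a - 1) * w ^ (1 - a) = 1 := by
          rw [← Real.rpow_add hw]; simp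
        have h1η : 1 / η = a / (1 - a) := by
          rw [hη]; field_simp
        calc a * w ^ (a - 1) * lowerGamma (1 - a) w
            ≤ a * w ^ (a - 1) * (w ^ (1 - a) / (1 - a)) := this
          _ = a * (w ^ (a - 1) * w ^ (1 - a)) / (1 - a) := by ring
          _ = a / (1 - a) := by rw [hww]; ring
          _ = 1 / η := h1η.symm
      linarith
    · have := lowerGamma_nonneg (a := a) hw.le
      have hp : (0:ℝ) ≤ w ^ (a - 1) := (Real.rpow_pos_of_pos hw _).le
      have : 0 ≤ a * w ^ (a - 1) * lowerGamma (1 - a) w :=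
        mul_nonneg (mul_nonneg ha.le hp) this
      linarith
  refine ⟨fun w hw => gFun_hasDerivAt ha ha1 hw, hbound, ?_⟩
  -- monotonicity of h w = gFun a w + w/η on [0, ∞)
  set h : ℝ → ℝ := fun w => gFun a w + w / η with hdef
  have hder : ∀ w : ℝ, 0 < w →
      HasDerivAt h (-(a * w ^ (a - 1) * lowerGamma (1 - a) w) + 1 / η) w := by
    intro w hw
    exact (gFun_hasDerivAt ha ha1 hw).add ((hasDerivAt_id w).div_const η)
  have hcontg : ContinuousOn (gFun a) (Set.Ici 0) := by
    intro w hw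
    rcases eq_or_lt_of_le (Set.mem_Ici.mp hw) with h0 | hpos
    · subst h0
      have hlgc : ContinuousWithinAt (lowerGamma (1 - a)) (Set.Ici 0) 0 := by
        have hint : IntegrableOn (fun t : ℝ => t ^ (-a) * Real.exp (-t)) (Set.uIcc 0 1) volume := by
          rw [Set.uIcc_of_le (by norm_num)]
          exact (intervalIntegrable_iff_integrableOn_Icc_of_le (by norm_num)).mp
            (lg_intInt ha1 0 1)
        have hc := intervalIntegral.continuousOn_primitive_interval hint
        have h0m : (0:ℝ) ∈ Set.uIcc 0 1 := by
          rw [Set.uIcc_of_le (by norm_num)]; exact ⟨le_refl _, by norm_num⟩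
        have hcw := hc 0 h0m
        have : ContinuousWithinAt (lowerGamma (1 - a)) (Set.uIcc 0 1) 0 := by
          have heq : Set.EqOn (lowerGamma (1 - a))
              (fun x => ∫ t in (0:ℝ)..x, t ^ (-a) * Real.exp (-t)) (Set.uIcc 0 1) :=
            fun x _ => lowerGamma_eq x
          exact (hcw.congr heq (lowerGamma_eq 0))
        apply this.mono_of_mem_nhdsWithin
        rw [Set.uIcc_of_le (by norm_num)]
        have : Set.Icc (0:ℝ) 1 = Set.Ici 0 ∩ Set.Iic 1 := (Set.Ici_inter_Iic).symm
        rw [this]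
        exact inter_mem_nhdsWithin _ (Iic_mem_nhds (by norm_num))
      have hrpow : ContinuousWithinAt (fun w : ℝ => w ^ a) (Set.Ici 0) 0 :=
        (Real.continuousAt_rpow_const 0 a (Or.inr ha.le)).continuousWithinAt
      have : ContinuousWithinAt (gFun a) (Set.Ici 0) 0 := by
        unfold gFun
        exact (continuousWithinAt_const.sub
          ((Real.continuous_exp.comp continuous_neg).continuousAt.continuousWithinAt)).sub
          (hrpow.mul hlgc)
      exact this
    · exact (gFun_hasDerivAt ha ha1 hpos).continuousAt.continuousWithinAt
  have hconth : ContinuousOn h (Set.Ici 0) :=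
    hcontg.add ((continuous_id.div_const η).continuousOn)
  have hmono : MonotoneOn h (Set.Ici 0) := by
    apply monotoneOn_of_deriv_nonneg (convex_Ici 0) hconth
    · intro x hx
      rw [interior_Ici] at hx
      exact (hder x hx).differentiableAt.differentiableWithinAt
    · intro x hx
      rw [interior_Ici] at hx
      rw [(hder x hx).deriv]
      have := (hbound x hx).1
      linarith
  intro w hw
  have h0 : h 0 = 0 := by
    simp only [hdef, gFun, lowerGamma]
    rw [Real.zero_rpow ha.ne']
    simp
  have := hmono (Set.self_mem_Ici) (Set.mem_Ici.mpr hw) hw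
  rw [h0] at this
  simp only [hdef] at this
  linarith
end

section
/- Let 0 < a < 1, η = (1-a)/a, and g(w) = 1 - e^{-w} - w^a·γ(1-a, w). Then g(w) ≤ -(w/η)·(1 - w/2) for all w ≥ 0, and in particular g(w) ≤ -w/(2η) for 0 ≤ w ≤ 1. -/
theorem gFun_upper_bounds (a η : ℝ) (ha : 0 < a) (ha1 : a < 1) (hη : η = (1 - a) / a) :
    (∀ w : ℝ, 0 ≤ w → gFun a w ≤ -(w / η) * (1 - w / 2)) ∧
    (∀ w : ℝ, 0 ≤ w → w ≤ 1 → gFun a w ≤ -(w / (2 * η))) := by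
  have h1a : (0:ℝ) < 1 - a := by linarith
  have h2a : (0:ℝ) < 2 - a := by linarith
  have hηpos : 0 < η := by rw [hη]; positivity
  have hmain : ∀ w : ℝ, 0 ≤ w → gFun a w ≤ -(w / η) * (1 - w / 2) := by
    intro w hw
    rcases eq_or_lt_of_le hw with h0 | hwpos
    · subst hη
      simp [← h0, gFun, lowerGamma, Real.rpow_natCast]
    -- integrability facts
    have Ia : IntervalIntegrable (fun t : ℝ => t ^ (-a)) MeasureTheory.volume 0 w :=
      intervalIntegral.intervalIntegrable_rpow' (by linarith)
    have Ib : IntervalIntegrable (fun t : ℝ => t ^ (1 - a)) MeasureTheory.volume 0 w :=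
      intervalIntegral.intervalIntegrable_rpow' (by linarith)
    have Ie : IntervalIntegrable (fun t : ℝ => Real.exp (-t)) MeasureTheory.volume 0 w :=
      (Real.continuous_exp.comp continuous_neg).intervalIntegrable _ _
    have Iae : IntervalIntegrable (fun t : ℝ => t ^ (-a) * Real.exp (-t))
        MeasureTheory.volume 0 w := by
      apply Ia.mono_fun
      · exact (intervalIntegrable_iff.mp Ia).aestronglyMeasurable.mul
          (Real.continuous_exp.comp continuous_neg).aestronglyMeasurable
      · rw [Filter.EventuallyLE, MeasureTheory.ae_restrict_iff' measurableSet_uIoc]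
        filter_upwards with t ht
        rw [Set.uIoc_of_le hw] at ht
        have ht0 : 0 < t := ht.1
        have he : Real.exp (-t) ≤ 1 := Real.exp_le_one_iff.2 (by linarith)
        have h1 : (0:ℝ) ≤ t ^ (-a) := Real.rpow_nonneg ht0.le _
        simp only [norm_mul, Real.norm_eq_abs, abs_of_nonneg h1,
          abs_of_pos (Real.exp_pos (-t))]
        nlinarith [Real.exp_pos (-t)]
    -- rewrite gFun as a single integral
    have hg : gFun a w = ∫ t in (0:ℝ)..w,
        (Real.exp (-t) - w ^ a * (t ^ (-a) * Real.exp (-t))) := by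
      have h1 : (1:ℝ) - Real.exp (-w) = ∫ t in (0:ℝ)..w, Real.exp (-t) := by
        rw [intervalIntegral.integral_comp_neg (fun t => Real.exp t), integral_exp]
        simp
      have h2 : lowerGamma (1 - a) w = ∫ t in (0:ℝ)..w, t ^ (-a) * Real.exp (-t) := by
        unfold lowerGamma
        congr 1
        ext t
        norm_num
      rw [gFun, h1, h2, ← intervalIntegral.integral_const_mul,
        ← intervalIntegral.integral_sub Ie (Iae.const_mul _)]
    rw [hg]
    -- compare with the polynomial integrand
    have hcomp : (∫ t in (0:ℝ)..w, (Real.exp (-t) - w ^ a * (t ^ (-a) * Real.exp (-t)))) ≤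
        ∫ t in (0:ℝ)..w, ((1 - t) - w ^ a * (t ^ (-a) - t ^ (1 - a))) := by
      apply intervalIntegral.integral_mono_on hw (Ie.sub (Iae.const_mul _))
        (((continuous_const.sub continuous_id').intervalIntegrable _ _).sub
          ((Ia.sub Ib).const_mul _))
      intro x hx
      rcases eq_or_lt_of_le hx.1 with h0 | hx0
      · rw [← h0]
        rw [Real.zero_rpow (by linarith), Real.zero_rpow (by linarith)]
        simp
      · have hx1a : x ^ (1 - a) = x * x ^ (-a) := by
          rw [show (1:ℝ) - a = 1 + (-a) by ring, Real.rpow_add hx0, Real.rpow_one]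
        have hfac : 1 - w ^ a * x ^ (-a) ≤ 0 := by
          have h1 : (1:ℝ) ≤ (w / x) ^ a := by
            calc (1:ℝ) = 1 ^ a := (Real.one_rpow a).symm
            _ ≤ (w / x) ^ a :=
              Real.rpow_le_rpow zero_le_one ((le_div_iff₀ hx0).2 (by linarith [hx.2])) ha.le
          have h2 : (w / x) ^ a = w ^ a * x ^ (-a) := by
            rw [Real.div_rpow hw hx0.le, Real.rpow_neg hx0.le, div_eq_mul_inv]
          linarith [h2 ▸ h1]
        have hexp : 1 - x ≤ Real.exp (-x) := by
          have := Real.add_one_le_exp (-x)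
          linarith
        have key := mul_le_mul_of_nonpos_left hexp hfac
        calc Real.exp (-x) - w ^ a * (x ^ (-a) * Real.exp (-x))
            = (1 - w ^ a * x ^ (-a)) * Real.exp (-x) := by ring
          _ ≤ (1 - w ^ a * x ^ (-a)) * (1 - x) := key
          _ = (1 - x) - w ^ a * (x ^ (-a) - x ^ (1 - a)) := by rw [hx1a]; ring
    refine hcomp.trans ?_
    -- compute the polynomial integral
    have hval : (∫ t in (0:ℝ)..w, ((1 - t) - w ^ a * (t ^ (-a) - t ^ (1 - a)))) =
        (w - w ^ 2 / 2) - (w / (1 - a) - w ^ 2 / (2 - a)) := by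
      rw [intervalIntegral.integral_sub
        (show IntervalIntegrable (fun t : ℝ => (1:ℝ) - t) MeasureTheory.volume 0 w from
          (continuous_const.sub continuous_id').intervalIntegrable _ _)
        ((Ia.sub Ib).const_mul _),
        intervalIntegral.integral_const_mul,
        intervalIntegral.integral_sub Ia Ib,
        intervalIntegral.integral_sub (continuous_const.intervalIntegrable _ _)
          (continuous_id'.intervalIntegrable _ _),
        integral_rpow (Or.inl (by linarith)),
        integral_rpow (Or.inl (by linarith))]
      simp only [intervalIntegral.integral_const, integral_id,
        smul_eq_mul, mul_one, sub_zero]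
      rw [Real.zero_rpow (by linarith : -a + 1 ≠ 0),
        Real.zero_rpow (by linarith : (1:ℝ) - a + 1 ≠ 0)]
      have e1 : w ^ a * w ^ (-a + 1) = w := by
        rw [← Real.rpow_add hwpos]; norm_num
      have e2 : w ^ a * w ^ ((1:ℝ) - a + 1) = w ^ 2 := by
        rw [← Real.rpow_add hwpos, show a + (1 - a + 1) = ((2:ℕ):ℝ) by push_cast; ring,
          Real.rpow_natCast]
      rw [show (0:ℝ) ^ 2 = 0 from by norm_num, sub_zero, sub_zero, sub_zero,
        mul_sub, mul_div_assoc', mul_div_assoc', e1, e2,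
        show -a + 1 = 1 - a from by ring, show (1:ℝ) - a + 1 = 2 - a from by ring]
    rw [hval]
    -- final algebra
    have hkey : -(w / η) * (1 - w / 2) -
        ((w - w ^ 2 / 2) - (w / (1 - a) - w ^ 2 / (2 - a))) =
        a * w ^ 2 / (2 * (1 - a) * (2 - a)) := by
      rw [hη]
      field_simp
      ring
    nlinarith [hkey, mul_pos h1a h2a, sq_nonneg w,
      div_nonneg (mul_nonneg ha.le (sq_nonneg w))
        (by positivity : (0:ℝ) ≤ 2 * (1 - a) * (2 - a))]
  refine ⟨hmain, fun w hw hw1 => (hmain w hw).trans ?_⟩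
  have h1 : 0 ≤ w / η := div_nonneg hw hηpos.le
  have h2 : (1:ℝ) / 2 ≤ 1 - w / 2 := by linarith
  have : w / (2 * η) = (w / η) * (1 / 2) := by
    rw [mul_comm (2:ℝ) η, ← div_div]; ring
  nlinarith [mul_le_mul_of_nonneg_left h2 h1]
end

section
/- Let 0 < a < 1 and q(u) = -(1 - e^{-u} + u^a·Γ(1-a, u)). Then q is twice differentiable on (0,∞) with q''(u) = a·((1-a)·u^{a-2}·Γ(1-a,u) + u^{-1}·e^{-u}) ≥ 0; in particular q is convex on (0,∞). -/
/-- q(u) = -(1 - e^(-u) + u^a·Γ(1-a, u)). -/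
noncomputable def qFun (a u : ℝ) : ℝ := -(1 - Real.exp (-u) + u ^ a * upperGamma (1 - a) u)

/-- First derivative of q. -/
noncomputable def qFun' (a u : ℝ) : ℝ := -(a * u ^ (a - 1) * upperGamma (1 - a) u)

/-- Second derivative of q. -/
noncomputable def qFun'' (a u : ℝ) : ℝ :=
  a * ((1 - a) * u ^ (a - 2) * upperGamma (1 - a) u + u⁻¹ * Real.exp (-u))

open MeasureTheory Set intervalIntegral

lemma integrableOn_gammaIntegrand {s : ℝ} (hs : 0 < s) :
    IntegrableOn (fun t : ℝ => t ^ (s - 1) * Real.exp (-t)) (Set.Ioi 0) := by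
  have := Real.GammaIntegral_convergent hs
  simpa [mul_comm] using this

lemma continuousOn_gammaIntegrand (s : ℝ) :
    ContinuousOn (fun t : ℝ => t ^ (s - 1) * Real.exp (-t)) (Set.Ioi 0) := by
  intro x hx
  exact ((Real.continuousAt_rpow_const x (s - 1) (Or.inl (ne_of_gt hx))).mul
    ((Real.continuous_exp.comp continuous_neg).continuousAt)).continuousWithinAt

lemma intervalIntegrable_gammaIntegrand {s : ℝ} (hs : 0 < s) {x y : ℝ}
    (hx : 0 < x) (hy : 0 < y) :
    IntervalIntegrable (fun t : ℝ => t ^ (s - 1) * Real.exp (-t)) volume x y := by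
  apply IntegrableOn.intervalIntegrable
  apply (integrableOn_gammaIntegrand hs).mono_set
  intro t ht
  rcases ht with ⟨h1, _⟩
  exact lt_of_lt_of_le (lt_min hx hy) h1

lemma upperGamma_eq {s : ℝ} (hs : 0 < s) {x : ℝ} (hx : 0 < x) :
    upperGamma s x = upperGamma s 1 - ∫ t in (1:ℝ)..x, t ^ (s - 1) * Real.exp (-t) := by
  set f : ℝ → ℝ := fun t => t ^ (s - 1) * Real.exp (-t) with hf
  have hint : ∀ {a : ℝ}, 0 < a → IntegrableOn f (Set.Ioi a) := fun {a} ha =>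
    (integrableOn_gammaIntegrand hs).mono_set (Set.Ioi_subset_Ioi ha.le)
  rcases le_total x 1 with h | h
  · have hunion : Set.Ioi x = Set.Ioc x 1 ∪ Set.Ioi 1 := by
      rw [Set.Ioc_union_Ioi_eq_Ioi h]
    have hdisj : Disjoint (Set.Ioc x 1) (Set.Ioi 1) := by
      apply Set.disjoint_left.2
      intro t ht1 ht2
      exact absurd ht1.2 (not_le.2 ht2)
    rw [upperGamma, upperGamma, hunion, setIntegral_union hdisj measurableSet_Ioi
      ((hint hx).mono_set (by rw [hunion]; exact Set.subset_union_left))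
      (hint one_pos), intervalIntegral.integral_symm,
      intervalIntegral.integral_of_le h]
    ring
  · have hunion : Set.Ioi 1 = Set.Ioc 1 x ∪ Set.Ioi x := by
      rw [Set.Ioc_union_Ioi_eq_Ioi h]
    have hdisj : Disjoint (Set.Ioc 1 x) (Set.Ioi x) := by
      apply Set.disjoint_left.2
      intro t ht1 ht2
      exact absurd ht1.2 (not_le.2 ht2)
    rw [upperGamma, upperGamma, intervalIntegral.integral_of_le h]
    rw [show (∫ t in Set.Ioi (1:ℝ), f t) = (∫ t in Set.Ioc 1 x, f t) + ∫ t in Set.Ioi x, f t by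
      rw [hunion, setIntegral_union hdisj measurableSet_Ioi
        ((hint one_pos).mono_set (by rw [hunion]; exact Set.subset_union_left)) (hint hx)]]
    ring

lemma hasDerivAt_upperGamma {s : ℝ} (hs : 0 < s) {x : ℝ} (hx : 0 < x) :
    HasDerivAt (upperGamma s) (-(x ^ (s - 1) * Real.exp (-x))) x := by
  set f : ℝ → ℝ := fun t => t ^ (s - 1) * Real.exp (-t) with hf
  have hd : HasDerivAt (fun y => upperGamma s 1 - ∫ t in (1:ℝ)..y, f t)
      (-(x ^ (s - 1) * Real.exp (-x))) x := by
    have h1 : HasDerivAt (fun y => ∫ t in (1:ℝ)..y, f t) (f x) x := by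
      apply intervalIntegral.integral_hasDerivAt_right
        (intervalIntegrable_gammaIntegrand hs one_pos hx)
      · exact (continuousOn_gammaIntegrand s).stronglyMeasurableAtFilter isOpen_Ioi x hx
      · exact ((Real.continuousAt_rpow_const x (s - 1) (Or.inl (ne_of_gt hx))).mul
          ((Real.continuous_exp.comp continuous_neg).continuousAt))
    simpa using (h1.const_sub (upperGamma s 1))
  apply hd.congr_of_eventuallyEq
  filter_upwards [eventually_gt_nhds hx] with y hy
  exact upperGamma_eq hs hy

lemma upperGamma_nonneg {s : ℝ} {x : ℝ} (hx : 0 < x) : 0 ≤ upperGamma s x := by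
  apply setIntegral_nonneg measurableSet_Ioi
  intro t ht
  have ht0 : (0:ℝ) < t := lt_trans hx ht
  exact mul_nonneg (Real.rpow_nonneg ht0.le _) (Real.exp_pos _).le

theorem qFun_second_deriv (a : ℝ) (ha : 0 < a) (ha1 : a < 1) :
    (∀ u : ℝ, 0 < u → HasDerivAt (qFun a) (qFun' a u) u) ∧
    (∀ u : ℝ, 0 < u → HasDerivAt (qFun' a) (qFun'' a u) u) ∧
    (∀ u : ℝ, 0 < u → 0 ≤ qFun'' a u) ∧
    ConvexOn ℝ (Set.Ioi 0) (qFun a) := by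
  have hs : 0 < 1 - a := by linarith
  have hG : ∀ u : ℝ, 0 < u →
      HasDerivAt (upperGamma (1 - a)) (-(u ^ (-a) * Real.exp (-u))) u := by
    intro u hu
    have := hasDerivAt_upperGamma hs hu
    rw [show (1 - a - 1 : ℝ) = -a by ring] at this
    exact this
  have h1 : ∀ u : ℝ, 0 < u → HasDerivAt (qFun a) (qFun' a u) u := by
    intro u hu
    have hexp : HasDerivAt (fun v : ℝ => Real.exp (-v)) (-Real.exp (-u)) u := by
      simpa using ((hasDerivAt_neg u).exp)
    have hpow : HasDerivAt (fun v : ℝ => v ^ a) (a * u ^ (a - 1)) u :=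
      Real.hasDerivAt_rpow_const (Or.inl (ne_of_gt hu))
    have hprod := hpow.mul (hG u hu)
    have hsum : HasDerivAt (fun v => 1 - Real.exp (-v) + v ^ a * upperGamma (1 - a) v)
        (-(-Real.exp (-u)) + (a * u ^ (a - 1) * upperGamma (1 - a) u +
          u ^ a * -(u ^ (-a) * Real.exp (-u)))) u := (hexp.const_sub 1).add hprod
    have hkey : u ^ a * u ^ (-a) = 1 := by
      rw [← Real.rpow_add hu]; simp
    have : HasDerivAt (qFun a) (-(-(-Real.exp (-u)) + (a * u ^ (a - 1) * upperGamma (1 - a) u +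
        u ^ a * -(u ^ (-a) * Real.exp (-u))))) u := hsum.neg
    convert this using 1
    rw [qFun']
    have : u ^ a * -(u ^ (-a) * Real.exp (-u)) = -Real.exp (-u) := by
      rw [show u ^ a * -(u ^ (-a) * Real.exp (-u)) = -(u ^ a * u ^ (-a) * Real.exp (-u)) by ring,
        hkey]; ring
    rw [this]; ring
  have h2 : ∀ u : ℝ, 0 < u → HasDerivAt (qFun' a) (qFun'' a u) u := by
    intro u hu
    have hpow : HasDerivAt (fun v : ℝ => v ^ (a - 1)) ((a - 1) * u ^ (a - 1 - 1)) u :=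
      Real.hasDerivAt_rpow_const (Or.inl (ne_of_gt hu))
    have hprod : HasDerivAt (qFun' a) _ u := ((hpow.const_mul a).mul (hG u hu)).neg
    convert hprod using 1
    rw [qFun'']
    have hkey : u ^ (a - 1) * u ^ (-a) = u⁻¹ := by
      rw [← Real.rpow_add hu, show (a - 1 + -a : ℝ) = -1 by ring, Real.rpow_neg_one]
    have h2 : (a - 1 - 1 : ℝ) = a - 2 := by ring
    rw [h2]
    have : a * u ^ (a - 1) * -(u ^ (-a) * Real.exp (-u)) =
        -(a * (u ^ (a - 1) * u ^ (-a)) * Real.exp (-u)) := by ring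
    rw [this, hkey]
    ring
  have h3 : ∀ u : ℝ, 0 < u → 0 ≤ qFun'' a u := by
    intro u hu
    rw [qFun'']
    apply mul_nonneg ha.le
    apply add_nonneg
    · exact mul_nonneg (mul_nonneg hs.le (Real.rpow_nonneg hu.le _)) (upperGamma_nonneg hu)
    · exact mul_nonneg (inv_nonneg.2 hu.le) (Real.exp_pos _).le
  refine ⟨h1, h2, h3, ?_⟩
  have hint : interior (Set.Ioi (0:ℝ)) = Set.Ioi 0 := interior_Ioi
  have hderiv_eq : ∀ u : ℝ, 0 < u → deriv (qFun a) u = qFun' a u := fun u hu =>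
    (h1 u hu).deriv
  apply convexOn_of_deriv2_nonneg (convex_Ioi 0)
  · intro u hu
    exact (h1 u hu).continuousAt.continuousWithinAt
  · rw [hint]
    intro u hu
    exact (h1 u hu).differentiableAt.differentiableWithinAt
  · rw [hint]
    intro u hu
    have : HasDerivAt (deriv (qFun a)) (qFun'' a u) u := by
      apply (h2 u hu).congr_of_eventuallyEq
      filter_upwards [eventually_gt_nhds hu] with y hy
      exact hderiv_eq y hy
    exact this.differentiableAt.differentiableWithinAt
  · rw [hint]
    intro u hu
    have hd2 : HasDerivAt (deriv (qFun a)) (qFun'' a u) u := by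
      apply (h2 u hu).congr_of_eventuallyEq
      filter_upwards [eventually_gt_nhds hu] with y hy
      exact hderiv_eq y hy
    have : deriv^[2] (qFun a) u = qFun'' a u := by
      simp only [Function.iterate_succ, Function.iterate_zero, Function.comp_apply, id_eq]
      exact hd2.deriv
    rw [this]
    exact h3 u hu
end

section
/- Let 0 < a < 1 and g(w) = 1 - e^{-w} - w^a·γ(1-a,w), η = (1-a)/a. If c > log(2)/(γ(1-a,1) + e^{-1} - 1), then for all u > 0, 1 - 2·exp(c·g(u)) + exp(-c·u/η) > 0, i.e., exp(c·g(u)) - exp(-c·u/η) < 1 - exp(c·g(u)). -/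
open MeasureTheory Set intervalIntegral

namespace ResidualAux

lemma expneg_intInt (x y : ℝ) : IntervalIntegrable (fun t : ℝ => Real.exp (-t)) volume x y :=
  (Real.continuous_exp.comp continuous_neg).intervalIntegrable _ _

lemma rpow_intInt {a : ℝ} (ha1 : a < 1) (x y : ℝ) :
    IntervalIntegrable (fun t : ℝ => t ^ (-a)) volume x y :=
  intervalIntegrable_rpow' (by linarith)

lemma mix_intInt {a : ℝ} (ha1 : a < 1) (x y : ℝ) :
    IntervalIntegrable (fun t : ℝ => t ^ (-a) * Real.exp (-t)) volume x y :=
  (rpow_intInt ha1 x y).mul_continuousOn (Real.continuous_exp.comp continuous_neg).continuousOn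

lemma lg_eq (a x : ℝ) : lowerGamma (1 - a) x = ∫ t in (0:ℝ)..x, t ^ (-a) * Real.exp (-t) := by
  unfold lowerGamma
  simp only [show (1 : ℝ) - a - 1 = -a by ring]

lemma integral_expneg (x y : ℝ) :
    ∫ t in x..y, Real.exp (-t) = Real.exp (-x) - Real.exp (-y) := by
  rw [intervalIntegral.integral_comp_neg (fun t => Real.exp t), integral_exp]

lemma integral_rpow0 {a : ℝ} (ha1 : a < 1) (x : ℝ) :
    ∫ t in (0:ℝ)..x, t ^ (-a) = x ^ (1 - a) / (1 - a) := by
  have h1 : (-a + 1 : ℝ) = 1 - a := by ring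
  rw [integral_rpow (Or.inl (by linarith)), h1,
    Real.zero_rpow (by linarith : (1 - a : ℝ) ≠ 0), sub_zero]

lemma ae_Ioc_le {u : ℝ} {f g : ℝ → ℝ} (h : ∀ t ∈ Set.Ioc (0:ℝ) u, f t ≤ g t) :
    f ≤ᵐ[volume.restrict (Set.Icc (0:ℝ) u)] g := by
  have h0 : ∀ᵐ t ∂(volume : Measure ℝ), t ≠ 0 := by
    rw [MeasureTheory.ae_iff]
    simp only [ne_eq, not_not, Set.setOf_eq_eq_singleton]
    exact Real.volume_singleton
  filter_upwards [MeasureTheory.ae_restrict_mem measurableSet_Icc,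
    MeasureTheory.ae_restrict_of_ae h0] with t ht ht0
  exact h t ⟨ht.1.lt_of_ne (Ne.symm ht0), ht.2⟩

lemma rpow_neg_anti {a x y : ℝ} (ha : 0 ≤ a) (hx : 0 < x) (hxy : x ≤ y) :
    y ^ (-a) ≤ x ^ (-a) := by
  rw [Real.rpow_neg hx.le, Real.rpow_neg (hx.le.trans hxy)]
  have h1 : x ^ a ≤ y ^ a := Real.rpow_le_rpow hx.le hxy ha
  have h2 : 0 < x ^ a := Real.rpow_pos_of_pos hx a
  exact inv_anti₀ h2 h1

/-- Key bound on (0,1]:  u^a·γ(1-a,u) ≥ 1 - e^{-u} + u·a/(2(1-a)). -/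
lemma gammaB {a : ℝ} (ha : 0 < a) (ha1 : a < 1) {u : ℝ} (hu : 0 < u) (hu1 : u ≤ 1) :
    1 - Real.exp (-u) + u * a / (2 * (1 - a)) ≤ u ^ a * lowerGamma (1 - a) u := by
  have hL0 : 0 < Real.log 2 := Real.log_pos (by norm_num)
  set L := Real.log 2 with hLdef
  have hexpL : Real.exp (-L) = 1 / 2 := by
    rw [Real.exp_neg, Real.exp_log (by norm_num : (0:ℝ) < 2)]
    norm_num
  set w := min u L with hw
  have hw0 : 0 < w := lt_min hu hL0
  have hwu : w ≤ u := min_le_left _ _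
  have hwL : w ≤ L := min_le_right _ _
  set K := w ^ (-a) - u ^ (-a) with hK
  have hKnn : 0 ≤ K := sub_nonneg.2 (rpow_neg_anti ha.le hw0 hwu)
  -- pointwise inequality on (0, u]
  have hpt : ∀ t ∈ Set.Ioc (0:ℝ) u,
      K * Real.exp (-t) + (1/2) * t ^ (-a) + u ^ (-a) * Real.exp (-t) ≤
        t ^ (-a) * Real.exp (-t) + (K * (1/2) + u ^ (-a) * (1/2)) := by
    intro t ht
    have key : 0 ≤ (t ^ (-a) - w ^ (-a)) * (Real.exp (-t) - 1/2) := by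
      rcases le_or_gt t L with h | h
      · have htw : t ≤ w := le_min ht.2 h
        apply mul_nonneg
        · exact sub_nonneg.2 (rpow_neg_anti ha.le ht.1 htw)
        · rw [← hexpL]
          exact sub_nonneg.2 (Real.exp_le_exp.2 (by linarith))
      · have hwt : w ≤ t := hwL.trans h.le
        have hp : t ^ (-a) - w ^ (-a) ≤ 0 := sub_nonpos.2 (rpow_neg_anti ha.le hw0 hwt)
        have hq : Real.exp (-t) - 1/2 ≤ 0 := by
          rw [← hexpL]
          exact sub_nonpos.2 (Real.exp_le_exp.2 (by linarith))
        have := mul_nonneg (neg_nonneg.2 hp) (neg_nonneg.2 hq)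
        rwa [neg_mul_neg] at this
    nlinarith [key]
  -- integrabilities
  have I1 : IntervalIntegrable
      (fun t : ℝ => K * Real.exp (-t) + (1/2) * t ^ (-a) + u ^ (-a) * Real.exp (-t))
      volume 0 u :=
    (((expneg_intInt 0 u).const_mul K).add ((rpow_intInt ha1 0 u).const_mul (1/2))).add
      ((expneg_intInt 0 u).const_mul (u ^ (-a)))
  have I2 : IntervalIntegrable
      (fun t : ℝ => t ^ (-a) * Real.exp (-t) + (K * (1/2) + u ^ (-a) * (1/2)))
      volume 0 u :=
    (mix_intInt ha1 0 u).add (intervalIntegrable_const)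
  have hmono := intervalIntegral.integral_mono_ae_restrict hu.le I1 I2 (ae_Ioc_le hpt)
  -- compute both integrals
  have hIL : (∫ t in (0:ℝ)..u,
      (K * Real.exp (-t) + (1/2) * t ^ (-a) + u ^ (-a) * Real.exp (-t))) =
      K * (1 - Real.exp (-u)) + (1/2) * (u ^ (1 - a) / (1 - a))
        + u ^ (-a) * (1 - Real.exp (-u)) := by
    rw [intervalIntegral.integral_add (((expneg_intInt 0 u).const_mul K).add
        ((rpow_intInt ha1 0 u).const_mul (1/2))) ((expneg_intInt 0 u).const_mul (u ^ (-a))),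
      intervalIntegral.integral_add ((expneg_intInt 0 u).const_mul K)
        ((rpow_intInt ha1 0 u).const_mul (1/2)),
      intervalIntegral.integral_const_mul, intervalIntegral.integral_const_mul,
      intervalIntegral.integral_const_mul, integral_expneg, integral_rpow0 ha1]
    simp [Real.exp_zero]
  have hIR : (∫ t in (0:ℝ)..u,
      (t ^ (-a) * Real.exp (-t) + (K * (1/2) + u ^ (-a) * (1/2)))) =
      lowerGamma (1 - a) u + (K * (1/2) + u ^ (-a) * (1/2)) * u := by
    rw [intervalIntegral.integral_add (mix_intInt ha1 0 u) intervalIntegrable_const,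
      intervalIntegral.integral_const, lg_eq]
    simp [mul_comm]
  rw [hIL, hIR] at hmono
  -- X ≥ 0
  have hE : Real.exp (-u) * (1 + u) ≤ 1 := by
    have h1 : u + 1 ≤ Real.exp u := Real.add_one_le_exp u
    have h2 : Real.exp (-u) * Real.exp u = 1 := by
      rw [← Real.exp_add]; simp
    nlinarith [Real.exp_pos (-u)]
  have hX : 0 ≤ 1 - Real.exp (-u) - u / 2 := by
    nlinarith [hE, mul_nonneg hu.le (sub_nonneg.2 hu1), Real.exp_pos (-u)]
  have hid : u ^ (-a) * u = u ^ (1 - a) := by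
    rw [show (1 - a : ℝ) = -a + 1 by ring, Real.rpow_add hu, Real.rpow_one]
  -- deduce lower bound for γ
  have key : (1/2) * (u ^ (1 - a) / (1 - a)) + u ^ (-a) * (1 - Real.exp (-u)) - u ^ (1 - a) / 2
      ≤ lowerGamma (1 - a) u := by
    have expand : (K * (1/2) + u ^ (-a) * (1/2)) * u = K * (u/2) + (u ^ (-a) * u) / 2 := by
      ring
    rw [expand, hid] at hmono
    have P1 : 0 ≤ K * (1 - Real.exp (-u) - u / 2) := mul_nonneg hKnn hX
    linarith [P1, hmono]
  have hua : (0:ℝ) < u ^ a := Real.rpow_pos_of_pos hu a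
  have h3 := mul_le_mul_of_nonneg_left key hua.le
  have hid2 : u ^ a * u ^ (1 - a) = u := by
    rw [← Real.rpow_add hu, show a + (1 - a) = (1:ℝ) by ring, Real.rpow_one]
  have hid3 : u ^ a * u ^ (-a) = 1 := by
    rw [← Real.rpow_add hu, show a + -a = (0:ℝ) by ring, Real.rpow_zero]
  have hexpand : u ^ a * ((1/2) * (u ^ (1 - a) / (1 - a)) + u ^ (-a) * (1 - Real.exp (-u))
      - u ^ (1 - a) / 2) = (1/2) * ((u ^ a * u ^ (1 - a)) / (1 - a))
      + (u ^ a * u ^ (-a)) * (1 - Real.exp (-u)) - (u ^ a * u ^ (1 - a)) / 2 := by ring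
  rw [hexpand, hid2, hid3] at h3
  have hfin : (1/2) * (u / (1 - a)) + 1 * (1 - Real.exp (-u)) - u / 2
      = 1 - Real.exp (-u) + u * a / (2 * (1 - a)) := by
    have hne : (1:ℝ) - a ≠ 0 := by linarith
    field_simp
    ring
  linarith [hfin ▸ h3]

/-- Monotone-type bound for u ≥ 1. -/
lemma gammaC {a : ℝ} (ha : 0 < a) (ha1 : a < 1) {u : ℝ} (hu : 1 ≤ u) :
    Real.exp (-1) - Real.exp (-u) + lowerGamma (1 - a) 1 ≤ u ^ a * lowerGamma (1 - a) u := by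
  have hu0 : 0 < u := lt_of_lt_of_le one_pos hu
  have hsplit : lowerGamma (1 - a) u
      = lowerGamma (1 - a) 1 + ∫ t in (1:ℝ)..u, t ^ (-a) * Real.exp (-t) := by
    rw [lg_eq, lg_eq]
    exact (intervalIntegral.integral_add_adjacent_intervals (mix_intInt ha1 0 1)
      (mix_intInt ha1 1 u)).symm
  have hγ1 : 0 ≤ lowerGamma (1 - a) 1 := by
    rw [lg_eq]
    apply intervalIntegral.integral_nonneg (by norm_num)
    intro t ht
    exact mul_nonneg (Real.rpow_nonneg ht.1 _) (Real.exp_pos _).le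
  have hua1 : (1:ℝ) ≤ u ^ a := Real.one_le_rpow hu ha.le
  have h2 : Real.exp (-1) - Real.exp (-u) ≤ u ^ a * ∫ t in (1:ℝ)..u, t ^ (-a) * Real.exp (-t) := by
    rw [← intervalIntegral.integral_const_mul]
    have hmono : (∫ t in (1:ℝ)..u, Real.exp (-t))
        ≤ ∫ t in (1:ℝ)..u, u ^ a * (t ^ (-a) * Real.exp (-t)) := by
      apply intervalIntegral.integral_mono_on hu (expneg_intInt 1 u)
        ((mix_intInt ha1 1 u).const_mul _)
      intro t ht
      have ht0 : (0:ℝ) < t := lt_of_lt_of_le one_pos ht.1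
      have h1 : (1:ℝ) ≤ u ^ a * t ^ (-a) := by
        have hle : t ^ a ≤ u ^ a := Real.rpow_le_rpow ht0.le ht.2 ha.le
        have hp : (0:ℝ) < t ^ a := Real.rpow_pos_of_pos ht0 a
        rw [Real.rpow_neg ht0.le, ← div_eq_mul_inv, le_div_iff₀ hp, one_mul]
        exact hle
      calc Real.exp (-t) = 1 * Real.exp (-t) := (one_mul _).symm
        _ ≤ (u ^ a * t ^ (-a)) * Real.exp (-t) :=
            mul_le_mul_of_nonneg_right h1 (Real.exp_pos _).le
        _ = u ^ a * (t ^ (-a) * Real.exp (-t)) := by ring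
    rw [integral_expneg] at hmono
    exact hmono
  have h3 : lowerGamma (1 - a) 1 ≤ u ^ a * lowerGamma (1 - a) 1 :=
    le_mul_of_one_le_left hγ1 hua1
  calc Real.exp (-1) - Real.exp (-u) + lowerGamma (1 - a) 1
      ≤ u ^ a * lowerGamma (1 - a) 1
        + u ^ a * ∫ t in (1:ℝ)..u, t ^ (-a) * Real.exp (-t) := by linarith
    _ = u ^ a * lowerGamma (1 - a) u := by rw [hsplit, mul_add]

end ResidualAux

open ResidualAux in
theorem residual_improvement (a η c : ℝ) (ha : 0 < a) (ha1 : a < 1)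
    (hη : η = (1 - a) / a)
    (hc : Real.log 2 / (lowerGamma (1 - a) 1 + Real.exp (-1) - 1) < c) :
    ∀ u : ℝ, 0 < u →
      0 < 1 - 2 * Real.exp (c * gFun a u) + Real.exp (-(c * u / η)) ∧
      Real.exp (c * gFun a u) - Real.exp (-(c * u / η)) < 1 - Real.exp (c * gFun a u) := by
  have ha' : (0:ℝ) < 1 - a := by linarith
  have hηpos : 0 < η := by rw [hη]; positivity
  have hG := gammaB ha ha1 one_pos (le_refl (1:ℝ))
  rw [Real.one_rpow] at hG
  have hD : 0 < lowerGamma (1 - a) 1 + Real.exp (-1) - 1 := by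
    have hp : 0 < 1 * a / (2 * (1 - a)) := by positivity
    linarith
  have hc0 : 0 < c := lt_trans (div_pos (Real.log_pos (by norm_num)) hD) hc
  have hcD : Real.log 2 < c * (lowerGamma (1 - a) 1 + Real.exp (-1) - 1) :=
    (div_lt_iff₀ hD).1 hc
  intro u hu
  have key : 0 < 1 - 2 * Real.exp (c * gFun a u) + Real.exp (-(c * u / η)) := by
    rcases le_or_gt u 1 with h1 | h1
    · -- small u
      have hg : gFun a u ≤ -(u * a / (2 * (1 - a))) := by
        have := gammaB ha ha1 hu h1
        unfold gFun
        linarith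
      have heq : c * (u * a / (2 * (1 - a))) = c * u / (2 * η) := by
        rw [hη]; field_simp
      have harg : c * gFun a u ≤ -(c * u / (2 * η)) := by
        have h5 := mul_le_mul_of_nonneg_left hg hc0.le
        rw [mul_neg, heq] at h5
        exact h5
      set y := Real.exp (-(c * u / (2 * η))) with hy
      have hexp : Real.exp (c * gFun a u) ≤ y := Real.exp_le_exp.2 harg
      have hy1 : y < 1 := by
        rw [hy, Real.exp_lt_one_iff]
        have : 0 < c * u / (2 * η) := by positivity
        linarith
      have hsq : Real.exp (-(c * u / η)) = y ^ 2 := by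
        rw [hy, sq, ← Real.exp_add]
        congr 1
        field_simp
        ring
      rw [hsq]
      nlinarith [hexp, pow_pos (by linarith : (0:ℝ) < 1 - y) 2]
    · -- large u
      have hg : gFun a u ≤ 1 - Real.exp (-1) - lowerGamma (1 - a) 1 := by
        have := gammaC ha ha1 h1.le
        unfold gFun
        linarith
      have h5 := mul_le_mul_of_nonneg_left hg hc0.le
      have harg : c * gFun a u < -Real.log 2 := by nlinarith [h5, hcD]
      have hlt : Real.exp (c * gFun a u) < 1 / 2 := by
        have h6 := Real.exp_lt_exp.2 harg
        rwa [Real.exp_neg, Real.exp_log (by norm_num : (0:ℝ) < 2),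
          show ((2:ℝ))⁻¹ = 1/2 by norm_num] at h6
      have := Real.exp_pos (-(c * u / η))
      linarith
  exact ⟨key, by linarith⟩
end
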